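/- arXiv:2504.15837 — 2 statements merged into one kernel-verified Lean document; each statement's English description precedes it below -/
import Mathlib

section
/- Let $F(x,y) = \sqrt{x(x+y)} + \sqrt{(1-x)(1-x-y)} - 1$. For any fixed $y \in (0, 3/4)$ and any $x \in [y/3, 1-y]$, one has $F(x,y) \leq -\frac{1}{16} y^2$. -/
/-!
Completing the square, `x(x+y) = a² - y²/4` and `(1-x)(1-x-y) = b² - y²/4` with
`a = x + y/2`, `b = 1 - x - y/2`, `a + b = 1`. The tangent-line bound
`√(a² - c) ≤ a - c/(2a)` then gives `F(x,y) ≤ -(y²/8)(1/a + 1/b) ≤ -y²/2`,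
since `1/a + 1/b ≥ 4` when `a + b = 1`.
-/

open Real

lemma sqrt_sq_sub_le {a c : ℝ} (ha : 0 < a) (hc : c ≤ 2 * a ^ 2) :
    √(a ^ 2 - c) ≤ a - c / 2 * a⁻¹ := by
  have hrhs : a - c / 2 * a⁻¹ = (a ^ 2 - c / 2) / a := by field_simp
  rw [Real.sqrt_le_iff, hrhs]
  refine ⟨div_nonneg (by linarith) ha.le, ?_⟩
  rw [div_pow, le_div_iff₀ (by positivity)]
  nlinarith [sq_nonneg c]

lemma four_le_inv_add_inv_of_add_eq_one {a b : ℝ} (ha : 0 < a) (hb : 0 < b) (hab : a + b = 1) :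
    4 ≤ a⁻¹ + b⁻¹ := by
  rw [inv_add_inv ha.ne' hb.ne', hab, le_div_iff₀ (by positivity)]
  nlinarith [sq_nonneg (a - b)]

theorem F_le_of_middle_range_general (x y : ℝ) (hy0 : 0 < y)
    (hx0 : y / 3 ≤ x) (hx1 : x ≤ 1 - y) :
    Real.sqrt (x * (x + y)) + Real.sqrt ((1 - x) * (1 - x - y)) - 1 ≤ -(1 / 16) * y ^ 2 := by
  have ha : 0 < x + y / 2 := by linarith
  have hb : 0 < 1 - x - y / 2 := by linarith
  have h₁ : √(x * (x + y)) ≤ (x + y / 2) - y ^ 2 / 4 / 2 * (x + y / 2)⁻¹ := by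
    rw [show x * (x + y) = (x + y / 2) ^ 2 - y ^ 2 / 4 by ring]
    exact sqrt_sq_sub_le ha (by nlinarith)
  have h₂ : √((1 - x) * (1 - x - y)) ≤ (1 - x - y / 2) - y ^ 2 / 4 / 2 * (1 - x - y / 2)⁻¹ := by
    rw [show (1 - x) * (1 - x - y) = (1 - x - y / 2) ^ 2 - y ^ 2 / 4 by ring]
    exact sqrt_sq_sub_le hb (by nlinarith)
  have hinv := four_le_inv_add_inv_of_add_eq_one ha hb (by ring)
  calc √(x * (x + y)) + √((1 - x) * (1 - x - y)) - 1
      ≤ -(y ^ 2 / 8) * ((x + y / 2)⁻¹ + (1 - x - y / 2)⁻¹) := by linarith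
    _ ≤ -(y ^ 2 / 8) * 4 := mul_le_mul_of_nonpos_left hinv (by nlinarith)
    _ ≤ -(1 / 16) * y ^ 2 := by nlinarith

/-- For `0 < y < 3/4` and `y/3 ≤ x ≤ 1 - y`, one has
`√(x(x+y)) + √((1-x)(1-x-y)) - 1 ≤ -y²/16`. -/
theorem F_le_of_middle_range (x y : ℝ) (hy0 : 0 < y) (hy1 : y < 3 / 4)
    (hx0 : y / 3 ≤ x) (hx1 : x ≤ 1 - y) :
    Real.sqrt (x * (x + y)) + Real.sqrt ((1 - x) * (1 - x - y)) - 1 ≤ -(1 / 16) * y ^ 2 :=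
  F_le_of_middle_range_general x y hy0 hx0 hx1
end

section
/- Suppose that for each $t > 0$, $U_t$ and $V_t$ are independent random variables, $\beta(t) \to \infty$, and for every $\varepsilon > 0$ there exist $t^*_\varepsilon > 0$ and $x^*_\varepsilon \geq 1$ such that for all $t > t^*_\varepsilon$ and $x \in [x^*_\varepsilon, \beta(t)]$: $e^{-\frac{1}{12}(1+\varepsilon)x^3} \leq \mathbb{P}(U_t \leq -x) \leq e^{-\frac{1}{12}(1-\varepsilon)x^3}$ and the same bounds hold for $V_t$. Then for each $s \in (0,1)$, for $\varepsilon$ small enough and any $\tilde{x} \geq x^*_\varepsilon$, there exists $t^*_{\varepsilon,s,\tilde{x}} > 0$ such that for all $t > t^*_{\varepsilon,s,\tilde{x}}$, $\mathbb{P}\left(s^{1/3} U_t + (1-s)^{1/3} V_t \leq -z\right) \geq \frac{1}{2} e^{-\frac{1}{12}(1+\varepsilon) c_s z^3}$, where $z = (s^{1/3} + (1-s)^{1/3}) \tilde{x}/\varepsilon$ and $c_s = \frac{1}{1 + 2\sqrt{s(1-s)}} < 1$. -/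
set_option maxHeartbeats 1000000


open MeasureTheory ProbabilityTheory Real Filter

/-- Left-tail superadditivity of cube-exponential tails under independent convex combination
(Lemma fluc1b): if `U_t, V_t` are independent with
`e^{-(1/12)(1+ε)x³} ≤ ℙ(U_t ≤ -x) ≤ e^{-(1/12)(1-ε)x³}` (and the same for `V_t`)
for `t > t*_ε` and `x ∈ [x*_ε, β(t)]`, where `β(t) → ∞`, then for each `s ∈ (0,1)`,
`ε` small enough and `x̃ ≥ x*_ε`, for all `t` large enough,
`ℙ(s^{1/3} U_t + (1-s)^{1/3} V_t ≤ -z) ≥ (1/2) e^{-(1/12)(1+ε) c_s z³}`,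
where `z = (s^{1/3}+(1-s)^{1/3}) x̃ / ε` and `c_s = 1/(1+2√(s(1-s)))`. -/
theorem left_tail_superadditivity {Ω : Type*} [MeasurableSpace Ω] (μ : Measure Ω)
    [IsProbabilityMeasure μ] (U V : ℝ → Ω → ℝ)
    (hmU : ∀ t, Measurable (U t)) (hmV : ∀ t, Measurable (V t))
    (hind : ∀ t, IndepFun (U t) (V t) μ)
    (β : ℝ → ℝ) (hβ : Tendsto β atTop atTop)
    (tstar xstar : ℝ → ℝ) (hxstar : ∀ ε : ℝ, 0 < ε → 1 ≤ xstar ε)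
    (htailU : ∀ ε : ℝ, 0 < ε → ∀ t : ℝ, tstar ε < t → ∀ x : ℝ, xstar ε ≤ x → x ≤ β t →
      ENNReal.ofReal (Real.exp (-(1 / 12) * (1 + ε) * x ^ 3)) ≤ μ {ω | U t ω ≤ -x} ∧
        μ {ω | U t ω ≤ -x} ≤ ENNReal.ofReal (Real.exp (-(1 / 12) * (1 - ε) * x ^ 3)))
    (htailV : ∀ ε : ℝ, 0 < ε → ∀ t : ℝ, tstar ε < t → ∀ x : ℝ, xstar ε ≤ x → x ≤ β t →
      ENNReal.ofReal (Real.exp (-(1 / 12) * (1 + ε) * x ^ 3)) ≤ μ {ω | V t ω ≤ -x} ∧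
        μ {ω | V t ω ≤ -x} ≤ ENNReal.ofReal (Real.exp (-(1 / 12) * (1 - ε) * x ^ 3))) :
    ∀ s : ℝ, 0 < s → s < 1 →
      (1 : ℝ) / (1 + 2 * Real.sqrt (s * (1 - s))) < 1 ∧
      ∃ ε₀ : ℝ, 0 < ε₀ ∧ ∀ ε : ℝ, 0 < ε → ε ≤ ε₀ → ∀ xtilde : ℝ, xstar ε ≤ xtilde →
        ∃ T : ℝ, 0 < T ∧ ∀ t : ℝ, T < t →
          ENNReal.ofReal ((1 / 2) * Real.exp (-(1 / 12) * (1 + ε) *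
              ((1 : ℝ) / (1 + 2 * Real.sqrt (s * (1 - s)))) *
              ((s ^ ((1 : ℝ) / 3) + (1 - s) ^ ((1 : ℝ) / 3)) * xtilde / ε) ^ 3)) ≤
            μ {ω | s ^ ((1 : ℝ) / 3) * U t ω + (1 - s) ^ ((1 : ℝ) / 3) * V t ω ≤
              -((s ^ ((1 : ℝ) / 3) + (1 - s) ^ ((1 : ℝ) / 3)) * xtilde / ε)} := by
  intro s hs hs1
  set a : ℝ := s ^ ((1:ℝ)/3) with ha_def
  set b : ℝ := (1 - s) ^ ((1:ℝ)/3) with hb_def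
  have hs1' : (0:ℝ) < 1 - s := by linarith
  have ha : 0 < a := Real.rpow_pos_of_pos hs _
  have hb : 0 < b := Real.rpow_pos_of_pos hs1' _
  have ha3 : a ^ 3 = s := by
    rw [ha_def, ← Real.rpow_natCast (s ^ ((1:ℝ)/3)) 3, ← Real.rpow_mul hs.le]
    norm_num
  have hb3 : b ^ 3 = 1 - s := by
    rw [hb_def, ← Real.rpow_natCast ((1-s) ^ ((1:ℝ)/3)) 3, ← Real.rpow_mul hs1'.le]
    norm_num
  set sa : ℝ := Real.sqrt a with hsa_def
  set sb : ℝ := Real.sqrt b with hsb_def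
  have hsa : 0 < sa := Real.sqrt_pos.mpr ha
  have hsb : 0 < sb := Real.sqrt_pos.mpr hb
  have hsa2 : sa ^ 2 = a := Real.sq_sqrt ha.le
  have hsb2 : sb ^ 2 = b := Real.sq_sqrt hb.le
  have hsa3 : sa ^ 3 = Real.sqrt s := by
    have h1 : Real.sqrt s = a * sa := by
      rw [← ha3, pow_succ, Real.sqrt_mul (by positivity), Real.sqrt_sq ha.le, hsa_def]
    rw [h1, ← hsa2]; ring
  have hsb3 : sb ^ 3 = Real.sqrt (1 - s) := by
    have h1 : Real.sqrt (1 - s) = b * sb := by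
      rw [← hb3, pow_succ, Real.sqrt_mul (by positivity), Real.sqrt_sq hb.le, hsb_def]
    rw [h1, ← hsb2]; ring
  set D : ℝ := Real.sqrt s + Real.sqrt (1 - s) with hD_def
  have hD : 0 < D := by positivity
  have hD2 : D ^ 2 = 1 + 2 * Real.sqrt (s * (1 - s)) := by
    have h1 : Real.sqrt s ^ 2 = s := Real.sq_sqrt hs.le
    have h2 : Real.sqrt (1 - s) ^ 2 = 1 - s := Real.sq_sqrt hs1'.le
    have h3 : Real.sqrt (s * (1 - s)) = Real.sqrt s * Real.sqrt (1 - s) :=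
      Real.sqrt_mul hs.le _
    have h4 : D ^ 2 = Real.sqrt s ^ 2 + 2 * (Real.sqrt s * Real.sqrt (1 - s))
        + Real.sqrt (1 - s) ^ 2 := by rw [hD_def]; ring
    rw [h4, h1, h2, ← h3]; ring
  have hsqrtpos : 0 < Real.sqrt (s * (1 - s)) := Real.sqrt_pos.mpr (by positivity)
  have hden : (1:ℝ) < 1 + 2 * Real.sqrt (s * (1 - s)) := by linarith
  have hc : (1:ℝ) / (1 + 2 * Real.sqrt (s * (1 - s))) = 1 / D ^ 2 := by rw [hD2]
  refine ⟨by rw [div_lt_one (by linarith)]; exact hden, ?_⟩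
  refine ⟨min ((a + b) * sa / D) ((a + b) * sb / D), by positivity, ?_⟩
  intro ε hε hε0 xtilde hxt
  have hxt1 : (1:ℝ) ≤ xtilde := le_trans (hxstar ε hε) hxt
  set z : ℝ := (a + b) * xtilde / ε with hz_def
  have hz : 0 < z := by positivity
  set u : ℝ := z * sa / D with hu_def
  set v : ℝ := z * sb / D with hv_def
  have hu : 0 < u := by positivity
  have hv : 0 < v := by positivity
  -- lower bounds on u, v
  have hεu : ε * D ≤ (a + b) * sa := by
    have := le_trans hε0 (min_le_left ((a + b) * sa / D) ((a + b) * sb / D))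
    calc ε * D ≤ ((a + b) * sa / D) * D := by
          apply mul_le_mul_of_nonneg_right this hD.le
      _ = (a + b) * sa := by field_simp
  have hεv : ε * D ≤ (a + b) * sb := by
    have := le_trans hε0 (min_le_right ((a + b) * sa / D) ((a + b) * sb / D))
    calc ε * D ≤ ((a + b) * sb / D) * D := by
          apply mul_le_mul_of_nonneg_right this hD.le
      _ = (a + b) * sb := by field_simp
  have hu_ge : xtilde ≤ u := by
    rw [hu_def, hz_def, le_div_iff₀ hD]
    rw [div_mul_eq_mul_div, le_div_iff₀ hε]
    calc xtilde * D * ε = xtilde * (ε * D) := by ring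
      _ ≤ xtilde * ((a + b) * sa) := by
          apply mul_le_mul_of_nonneg_left hεu (by linarith)
      _ = (a + b) * xtilde * sa := by ring
  have hv_ge : xtilde ≤ v := by
    rw [hv_def, hz_def, le_div_iff₀ hD]
    rw [div_mul_eq_mul_div, le_div_iff₀ hε]
    calc xtilde * D * ε = xtilde * (ε * D) := by ring
      _ ≤ xtilde * ((a + b) * sb) := by
          apply mul_le_mul_of_nonneg_left hεv (by linarith)
      _ = (a + b) * xtilde * sb := by ring
  have hu_star : xstar ε ≤ u := le_trans hxt hu_ge
  have hv_star : xstar ε ≤ v := le_trans hxt hv_ge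
  -- a*u + b*v = z
  have hab : a * u + b * v = z := by
    have h1 : a * sa + b * sb = D := by
      rw [hD_def, ← hsa3, ← hsb3, ← hsa2, ← hsb2]; ring
    rw [hu_def, hv_def]
    field_simp
    exact h1
  -- u^3 + v^3 = z^3 / D^2
  have huv : u ^ 3 + v ^ 3 = z ^ 3 / D ^ 2 := by
    have h1 : sa ^ 3 + sb ^ 3 = D := by rw [hD_def, hsa3, hsb3]
    rw [hu_def, hv_def, div_pow, div_pow, ← add_div, mul_pow, mul_pow,
      ← mul_add, h1]
    field_simp
  -- choose T
  -- choose T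
  obtain ⟨T₀, hT₀⟩ := Filter.eventually_atTop.mp (hβ.eventually_ge_atTop (max u v))
  refine ⟨max T₀ (max (tstar ε) 1), by positivity, ?_⟩
  intro t ht
  have ht_tstar : tstar ε < t :=
    lt_of_le_of_lt (le_trans (le_max_left _ _) (le_max_right T₀ _)) ht
  have hβt : max u v ≤ β t := hT₀ t (le_of_lt (lt_of_le_of_lt (le_max_left T₀ _) ht))
  have hu_β : u ≤ β t := le_trans (le_max_left u v) hβt
  have hv_β : v ≤ β t := le_trans (le_max_right u v) hβt
  have hA := (htailU ε hε t ht_tstar u hu_star hu_β).1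
  have hB := (htailV ε hε t ht_tstar v hv_star hv_β).1
  have hAset : {ω | U t ω ≤ -u} = U t ⁻¹' Set.Iic (-u) := rfl
  have hBset : {ω | V t ω ≤ -v} = V t ⁻¹' Set.Iic (-v) := rfl
  have hmul : μ (U t ⁻¹' Set.Iic (-u) ∩ V t ⁻¹' Set.Iic (-v))
      = μ (U t ⁻¹' Set.Iic (-u)) * μ (V t ⁻¹' Set.Iic (-v)) :=
    (hind t).measure_inter_preimage_eq_mul _ _ measurableSet_Iic measurableSet_Iic
  have hsub : U t ⁻¹' Set.Iic (-u) ∩ V t ⁻¹' Set.Iic (-v) ⊆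
      {ω | a * U t ω + b * V t ω ≤ -z} := by
    rintro ω ⟨h1, h2⟩
    simp only [Set.mem_preimage, Set.mem_Iic] at h1 h2
    have hau : a * U t ω ≤ a * (-u) := mul_le_mul_of_nonneg_left h1 ha.le
    have hbv : b * V t ω ≤ b * (-v) := mul_le_mul_of_nonneg_left h2 hb.le
    have : a * U t ω + b * V t ω ≤ -(a * u + b * v) := by linarith
    rw [hab] at this
    exact this
  have hexp : -(1/12) * (1 + ε) * ((1:ℝ) / (1 + 2 * Real.sqrt (s * (1 - s)))) * z ^ 3
      = (-(1/12) * (1 + ε) * u ^ 3) + (-(1/12) * (1 + ε) * v ^ 3) := by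
    rw [hc, show (-(1/12) * (1 + ε) * u ^ 3) + (-(1/12) * (1 + ε) * v ^ 3)
      = -(1/12) * (1 + ε) * (u ^ 3 + v ^ 3) from by ring, huv]
    ring
  calc ENNReal.ofReal ((1/2) * Real.exp (-(1/12) * (1 + ε) *
        ((1:ℝ) / (1 + 2 * Real.sqrt (s * (1 - s)))) * z ^ 3))
      ≤ ENNReal.ofReal (Real.exp (-(1/12) * (1 + ε) *
        ((1:ℝ) / (1 + 2 * Real.sqrt (s * (1 - s)))) * z ^ 3)) := by
        apply ENNReal.ofReal_le_ofReal
        have hp := Real.exp_pos (-(1/12) * (1 + ε) *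
          ((1:ℝ) / (1 + 2 * Real.sqrt (s * (1 - s)))) * z ^ 3)
        linarith
    _ = ENNReal.ofReal (Real.exp (-(1/12) * (1 + ε) * u ^ 3) *
          Real.exp (-(1/12) * (1 + ε) * v ^ 3)) := by
        rw [← Real.exp_add, hexp]
    _ = ENNReal.ofReal (Real.exp (-(1/12) * (1 + ε) * u ^ 3)) *
          ENNReal.ofReal (Real.exp (-(1/12) * (1 + ε) * v ^ 3)) :=
        ENNReal.ofReal_mul (Real.exp_pos _).le
    _ ≤ μ {ω | U t ω ≤ -u} * μ {ω | V t ω ≤ -v} := mul_le_mul' hA hB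
    _ = μ (U t ⁻¹' Set.Iic (-u) ∩ V t ⁻¹' Set.Iic (-v)) := by
        rw [hAset, hBset, hmul]
    _ ≤ μ {ω | a * U t ω + b * V t ω ≤ -z} := measure_mono hsub
end
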